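/- Let (X,d) be a metric space and p a point in a completion or boundary at which the following holds: for all sequences z_n → p and w_n → p (in the ambient topology), and any fixed base point o, one has liminf (z_n|w_n)_o = ∞. Then for every ε > 0, every sequence of curves γ_n joining z_n to w_n with length L(γ_n) ≤ d(z_n,w_n) + ε eventually leaves every fixed bounded set around o; i.e. inf_{t} d(γ_n(t), o) → ∞. -/

import Mathlib

open Set Filter Topology

/-!
A point `γ t` of an `ε`-geodesic from `x` to `y` satisfies
`d(x, γ t) + d(γ t, y) ≤ d(x, y) + ε`, so the triangle inequality through `γ t` gives
`d(γ t, o) ≥ (x|y)_o - ε/2`. Hence the whole curve stays at distance at least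
`(z_n|w_n)_o - ε/2` from `o`, and this lower bound tends to infinity.
-/

/-- The Gromov product `(x|y)_o`. -/
noncomputable def gromovProduct {X : Type*} [PseudoMetricSpace X] (o x y : X) : ℝ :=
  (dist x o + dist y o - dist x y) / 2

theorem gromovProduct_sub_half_le_dist {X : Type*} [PseudoMetricSpace X] {x y z o : X} {ε : ℝ}
    (h : dist x z + dist z y ≤ dist x y + ε) : gromovProduct o x y - ε / 2 ≤ dist z o := by
  have hx := dist_triangle x z o
  have hy := dist_triangle_left y o z
  unfold gromovProduct
  linarith

theorem eVariationOn.edist_add_edist_le {α E : Type*} [LinearOrder α] [PseudoEMetricSpace E]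
    (f : α → E) {a b t : α} (hat : a ≤ t) (htb : t ≤ b) :
    edist (f a) (f t) + edist (f t) (f b) ≤ eVariationOn f (Icc a b) := by
  have hsplit := eVariationOn.Icc_add_Icc f (s := univ) hat htb (mem_univ t)
  simp only [univ_inter] at hsplit
  rw [← hsplit]
  exact add_le_add (eVariationOn.edist_le f ⟨le_rfl, hat⟩ ⟨hat, le_rfl⟩)
    (eVariationOn.edist_le f ⟨le_rfl, htb⟩ ⟨htb, le_rfl⟩)

theorem gromovProduct_sub_half_le_iInf_dist {α X : Type*} [LinearOrder α] [PseudoMetricSpace X]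
    (γ : α → X) {a b : α} {ε : ℝ} (hab : a ≤ b) (hε : 0 ≤ ε)
    (hlen : eVariationOn γ (Icc a b) ≤ ENNReal.ofReal (dist (γ a) (γ b) + ε)) (o : X) :
    gromovProduct o (γ a) (γ b) - ε / 2 ≤ ⨅ t : Icc a b, dist (γ t) o := by
  have : Nonempty (Icc a b) := (nonempty_Icc.2 hab).to_subtype
  refine le_ciInf fun ⟨t, hat, htb⟩ => gromovProduct_sub_half_le_dist ?_
  have hsum := (eVariationOn.edist_add_edist_le γ hat htb).trans hlen
  rw [edist_dist, edist_dist, ← ENNReal.ofReal_add dist_nonneg dist_nonneg,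
    ENNReal.ofReal_le_ofReal_iff (by positivity)] at hsum
  exact hsum

theorem stmt_2 {X T : Type*} [MetricSpace X] [TopologicalSpace T]
    (ι : X → T) (p : T) (o : X)
    (h : ∀ z w : ℕ → X,
      Tendsto (fun n => ι (z n)) atTop (𝓝 p) → Tendsto (fun n => ι (w n)) atTop (𝓝 p) →
      Tendsto (fun n => (dist (z n) o + dist (w n) o - dist (z n) (w n)) / 2) atTop atTop) :
    ∀ ε > (0 : ℝ), ∀ z w : ℕ → X,
      Tendsto (fun n => ι (z n)) atTop (𝓝 p) → Tendsto (fun n => ι (w n)) atTop (𝓝 p) →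
      ∀ (a b : ℕ → ℝ) (γ : ℕ → ℝ → X),
        (∀ n, a n ≤ b n) → (∀ n, γ n (a n) = z n) → (∀ n, γ n (b n) = w n) →
        (∀ n, eVariationOn (γ n) (Icc (a n) (b n)) ≤ ENNReal.ofReal (dist (z n) (w n) + ε)) →
        Tendsto (fun n => ⨅ t : Icc (a n) (b n), dist (γ n t) o) atTop atTop := by
  intro ε hε z w hz hw a b γ hab ha hb hlen
  have hbound : ∀ n, gromovProduct o (z n) (w n) - ε / 2 ≤ ⨅ t : Icc (a n) (b n), dist (γ n t) o :=
    fun n => by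
      simpa only [ha, hb] using gromovProduct_sub_half_le_iInf_dist (γ n) (hab n) hε.le
        (by simpa only [ha, hb] using hlen n) o
  have hgromov : Tendsto (fun n => gromovProduct o (z n) (w n)) atTop atTop := h z w hz hw
  exact tendsto_atTop_mono hbound
    (by simpa only [sub_eq_add_neg] using tendsto_atTop_add_const_right _ (-(ε / 2)) hgromov)
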